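/- arXiv:2501.06854 — 2 statements merged into one kernel-verified Lean document; each statement's English description precedes it below -/
import Mathlib

section
/- Let A be an n×n positive semidefinite real symmetric matrix with Tr(A) > 0 and eigenvalues λ₁ ≥ λ₂ ≥ … ≥ λₙ (listed with multiplicity). Set k = max(1, ⌊Tr(A)/(2λ₁)⌋). Then λ_k ≥ Tr(A)/(2n). -/
/-!
Let `j = k - 1 ≤ Tr(A) / (2λ₁)`. The `j` largest eigenvalues sum to at most `j λ₁ ≤ Tr(A) / 2`, so
the others carry at least `Tr(A) / 2`; there are at most `n` of them and each is at most `λ_k`.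
-/

open Finset

lemma Fin.sum_le_mul_add_mul_of_antitone {n : ℕ} {f : Fin n → ℝ} (hf : Antitone f) {M : ℝ}
    (hM : ∀ i, f i ≤ M) (j : Fin n) : ∑ i, f i ≤ j * M + (n - j) * f j := by
  have hsplit : ∑ i, f i = ∑ i ∈ Iio j, f i + ∑ i ∈ Ici j, f i := by
    rw [← sum_union (disjoint_left.2 fun i hi hi' => (mem_Iio.1 hi).not_ge (mem_Ici.1 hi'))]
    congr 1
    ext i
    simp [lt_or_ge i j]
  have hhead : ∑ i ∈ Iio j, f i ≤ j * M := by
    simpa using sum_le_sum fun i (_ : i ∈ Iio j) => hM i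
  have htail : ∑ i ∈ Ici j, f i ≤ (n - j) * f j := by
    simpa [Nat.cast_sub j.is_le'] using sum_le_sum fun i (hi : i ∈ Ici j) => hf (mem_Ici.1 hi)
  linarith

lemma Fin.sum_div_le_apply_floor_of_antitone {n : ℕ} (hn : 0 < n) {f : Fin n → ℝ}
    (hf : Antitone f) (hf_nonneg : ∀ i, 0 ≤ f i) :
    ∃ hk : max 1 ⌊(∑ i, f i) / (2 * f ⟨0, hn⟩)⌋₊ - 1 < n,
      (∑ i, f i) / (2 * n) ≤ f ⟨max 1 ⌊(∑ i, f i) / (2 * f ⟨0, hn⟩)⌋₊ - 1, hk⟩ := by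
  set S := ∑ i, f i
  set M := f ⟨0, hn⟩
  set x := S / (2 * M)
  have hM : ∀ i, f i ≤ M := fun i => hf (Fin.mk_le_mk.2 i.val.zero_le)
  have hM0 : 0 ≤ M := hf_nonneg _
  have hS : 0 ≤ S := sum_nonneg fun i _ => hf_nonneg i
  have hSM : S ≤ n * M := by simpa using sum_le_mul_add_mul_of_antitone hf hM ⟨0, hn⟩
  have hx : x ≤ n := div_le_of_le_mul₀ (by positivity) (by positivity) (by linarith)
  have hk_floor : max 1 ⌊x⌋₊ - 1 ≤ ⌊x⌋₊ := by omega
  have hk : max 1 ⌊x⌋₊ - 1 < n := by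
    have := Nat.floor_le_of_le (n := n) hx
    omega
  set j : Fin n := ⟨max 1 ⌊x⌋₊ - 1, hk⟩
  have hjM : (j : ℝ) * M ≤ S / 2 := by
    refine mul_le_of_le_div₀ (by positivity) (hf_nonneg _) ?_
    calc (j : ℝ) ≤ ⌊x⌋₊ := by exact_mod_cast hk_floor
      _ ≤ x := Nat.floor_le (by positivity)
      _ = S / 2 / M := by rw [div_div]
  refine ⟨hk, ?_⟩
  have := sum_le_mul_add_mul_of_antitone hf hM j
  rw [div_le_iff₀ (by positivity)]
  nlinarith [mul_nonneg (Nat.cast_nonneg (α := ℝ) j) (hf_nonneg j)]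

lemma Matrix.IsHermitian.sum_eigenvalues_comp_perm {ι : Type*} [Fintype ι] [DecidableEq ι]
    {A : Matrix ι ι ℝ} (hA : A.IsHermitian) (σ : Equiv.Perm ι) :
    ∑ i, hA.eigenvalues (σ i) = A.trace := by
  simpa using (Equiv.sum_comp σ hA.eigenvalues).trans hA.trace_eq_sum_eigenvalues.symm

theorem eigenvalue_lower_bound_general {n : ℕ} (hn : 0 < n)
    (A : Matrix (Fin n) (Fin n) ℝ) (hA : A.PosSemidef)
    (lam : Fin n → ℝ) (hdecr : Antitone lam)
    (henum : ∃ σ : Equiv.Perm (Fin n), ∀ i, lam i = hA.1.eigenvalues (σ i)) :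
    ∃ hk : max 1 (Nat.floor (A.trace / (2 * lam ⟨0, hn⟩))) - 1 < n,
      A.trace / (2 * n) ≤ lam ⟨max 1 (Nat.floor (A.trace / (2 * lam ⟨0, hn⟩))) - 1, hk⟩ := by
  obtain ⟨σ, hσ⟩ := henum
  obtain rfl : lam = fun i => hA.1.eigenvalues (σ i) := funext hσ
  rw [← hA.1.sum_eigenvalues_comp_perm σ]
  exact Fin.sum_div_le_apply_floor_of_antitone hn hdecr fun i => hA.eigenvalues_nonneg (σ i)

/-- Let `A` be an `n × n` positive semidefinite real symmetric matrix with
`Tr(A) > 0`, and let `lam : Fin n → ℝ` enumerate its eigenvalues with multiplicity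
in decreasing order `λ₁ ≥ … ≥ λₙ` (so `lam ⟨0,_⟩ = λ₁`). With
`k = max(1, ⌊Tr(A) / (2 λ₁)⌋)`, one has `k - 1 < n` and `λ_k ≥ Tr(A) / (2n)`. -/
theorem eigenvalue_lower_bound {n : ℕ} (hn : 0 < n)
    (A : Matrix (Fin n) (Fin n) ℝ) (hA : A.PosSemidef) (htr : 0 < A.trace)
    (lam : Fin n → ℝ) (hdecr : Antitone lam)
    (henum : ∃ σ : Equiv.Perm (Fin n), ∀ i, lam i = hA.1.eigenvalues (σ i)) :
    ∃ hk : max 1 (Nat.floor (A.trace / (2 * lam ⟨0, hn⟩))) - 1 < n,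
      A.trace / (2 * n) ≤ lam ⟨max 1 (Nat.floor (A.trace / (2 * lam ⟨0, hn⟩))) - 1, hk⟩ :=
  eigenvalue_lower_bound_general hn A hA lam hdecr henum
end

section
/- Let c₀ > 0 be a universal constant such that for every n ≥ 1, every isotropic log-concave random vector X in ℝⁿ, every 0 < ε < c₀, and every y ∈ ℝⁿ, ℙ(‖X − y‖₂² ≤ ε·n) ≤ ε^{c₀·n}. Then for all constants C₂, c₂ > 0, setting c₃ = min(c₀, c₂^{1/c₀}): for every n ≥ 1 and every convex body K ⊂ ℝⁿ in convex isotropic position satisfying Vol(K ∩ √(C₂·n)·B₂ⁿ) > c₂ⁿ, one has L_K² < C₂/c₃. -/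
open MeasureTheory ProbabilityTheory


noncomputable section

/-- A nonnegative function is log-concave if it satisfies
`f(t x + (1-t) y) ≥ f(x)^t f(y)^(1-t)`; this is equivalent to `f = e^{-V}`
for some convex function `V : ℝⁿ → ℝ ∪ {+∞}`. -/
def IsLogConcaveFun {E : Type*} [AddCommGroup E] [Module ℝ E] (f : E → ℝ) : Prop :=
  (∀ x, 0 ≤ f x) ∧
  ∀ x y : E, ∀ t : ℝ, 0 ≤ t → t ≤ 1 →
    f x ^ t * f y ^ (1 - t) ≤ f (t • x + (1 - t) • y)

/-- A measure on `ℝⁿ` is log-concave (with density) if it has a log-concave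
density with respect to the Lebesgue measure. -/
def IsLogConcaveMeasure {n : ℕ} (μ : Measure (EuclideanSpace ℝ (Fin n))) : Prop :=
  ∃ f : EuclideanSpace ℝ (Fin n) → ℝ, IsLogConcaveFun f ∧
    μ = volume.withDensity fun x => ENNReal.ofReal (f x)

/-- A measure on `ℝⁿ` is isotropic if it has mean `0` and covariance matrix `Iₙ`. -/
def IsIsotropicMeasure {n : ℕ} (μ : Measure (EuclideanSpace ℝ (Fin n))) : Prop :=
  (∀ i, ∫ x, x i ∂μ = 0) ∧
  (∀ i j, ∫ x, x i * x j ∂μ = if i = j then 1 else 0)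


/-- A convex body in `ℝⁿ`: a compact convex set with nonempty interior. -/
def IsConvexBody {n : ℕ} (K : Set (EuclideanSpace ℝ (Fin n))) : Prop :=
  IsCompact K ∧ Convex ℝ K ∧ (interior K).Nonempty

/-- A convex body `K ⊂ ℝⁿ` is in convex isotropic position with constant `L = L_K > 0`
if `Vol(K) = 1`, `∫_K x dx = 0` and `∫_K x xᵀ dx = L_K² Iₙ`. -/
def IsConvexIsotropic {n : ℕ} (K : Set (EuclideanSpace ℝ (Fin n))) (L : ℝ) : Prop :=
  IsConvexBody K ∧ volume K = 1 ∧ 0 < L ∧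
  (∀ i, ∫ x in K, x i = 0) ∧
  (∀ i j, ∫ x in K, x i * x j = if i = j then L ^ 2 else 0)

/-!
Rescaling by `L⁻¹` turns the uniform measure on `K` into an isotropic log-concave probability
measure `μ` with `μ(√(εn) B₂ⁿ) = Vol(K ∩ √(C₂n) B₂ⁿ)` for `ε = C₂ / L²`. If `L² ≥ C₂ / c₃`,
then `ε ≤ c₃`, and the small-ball estimate bounds this volume by `ε^{c₀n} ≤ c₂ⁿ`. The estimate
is only assumed for `ε < c₀`; it extends to `ε = c₀` because `μ` charges no sphere, so the
closed ball of radius `R` has the measure of the union of the closed balls of radii `r < R`.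
-/

open Metric Set Module Pointwise

section Haar

variable {E : Type*} [NormedAddCommGroup E] [NormedSpace ℝ E] [MeasurableSpace E] [BorelSpace E]

theorem measure_closedBall_le_of_forall_lt [FiniteDimensional ℝ E] [Nontrivial E]
    {μ ν : Measure E} [ν.IsAddHaarMeasure] (hμν : μ ≪ ν) {y : E} {R : ℝ} {b : ENNReal}
    (h : ∀ r ∈ Ioo 0 R, μ (closedBall y r) ≤ b) : μ (closedBall y R) ≤ b := by
  have hball : μ (ball y R) ≤ b := by
    rcases le_or_gt R 0 with hR | hR
    · simp [ball_eq_empty.2 hR]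
    obtain ⟨r, r_mono, r_mem, r_lim⟩ := exists_seq_strictMono_tendsto' hR
    have hunion : ball y R = ⋃ k, closedBall y (r k) := by
      ext x
      simp only [mem_ball, mem_iUnion, mem_closedBall]
      refine ⟨fun hx => ?_, fun ⟨k, hk⟩ => hk.trans_lt (r_mem k).2⟩
      obtain ⟨k, hk⟩ := (r_lim.eventually (lt_mem_nhds hx)).exists
      exact ⟨k, hk.le⟩
    rw [hunion, Monotone.measure_iUnion fun i j hij =>
      closedBall_subset_closedBall (r_mono.monotone hij)]
    exact iSup_le fun k => h _ (r_mem k)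
  calc μ (closedBall y R) ≤ μ (ball y R) + μ (sphere y R) := by
        rw [← ball_union_sphere]; exact measure_union_le _ _
    _ = μ (ball y R) := by rw [hμν (Measure.addHaar_sphere ν y R), add_zero]
    _ ≤ b := hball

theorem map_smul_restrict (μ : Measure E) [FiniteDimensional ℝ E] [μ.IsAddHaarMeasure] {c : ℝ}
    (hc : c ≠ 0) (K : Set E) :
    (μ.restrict K).map (c • ·) = ENNReal.ofReal |(c ^ finrank ℝ E)⁻¹| • μ.restrict (c • K) := by
  let e : E ≃ᵐ E := (Homeomorph.smulOfNeZero c hc).toMeasurableEquiv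
  have hK : e ⁻¹' (c • K) = K := by
    change (c • ·) ⁻¹' (c • K) = K
    rw [preimage_smul₀ hc, inv_smul_smul₀ hc]
  calc (μ.restrict K).map (c • ·) = (μ.restrict (e ⁻¹' (c • K))).map e := by rw [hK]; rfl
    _ = (μ.map (c • ·)).restrict (c • K) := (e.restrict_map μ _).symm
    _ = _ := by rw [Measure.map_addHaar_smul μ hc, Measure.restrict_smul]

theorem map_inv_smul_restrict_apply_closedBall (μ : Measure E) (K : Set E) {L : ℝ} (hL : 0 < L)
    (r : ℝ) : (μ.restrict K).map (L⁻¹ • ·) (closedBall 0 r) = μ (K ∩ closedBall 0 (L * r)) := by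
  rw [Measure.map_apply (measurable_const_smul _) measurableSet_closedBall,
    Measure.restrict_apply (measurableSet_closedBall.preimage (measurable_const_smul _)),
    preimage_smul_inv₀ hL.ne', smul_closedBall' hL.ne', smul_zero, Real.norm_of_nonneg hL.le,
    inter_comm]

end Haar

theorem isLogConcaveFun_indicator_const {E : Type*} [AddCommGroup E] [Module ℝ E] {S : Set E}
    (hS : Convex ℝ S) {c : ℝ} (hc : 0 ≤ c) : IsLogConcaveFun (S.indicator fun _ => c) := by
  have hnonneg : ∀ x, 0 ≤ S.indicator (fun _ => c) x := indicator_nonneg fun _ _ => hc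
  refine ⟨hnonneg, fun x y t ht0 ht1 => ?_⟩
  rcases ht0.eq_or_lt with rfl | ht0
  · simp
  rcases ht1.eq_or_lt with rfl | ht1
  · simp
  by_cases hx : x ∈ S
  · by_cases hy : y ∈ S
    · rw [indicator_of_mem hx, indicator_of_mem hy,
        indicator_of_mem (hS hx hy ht0.le (sub_nonneg.2 ht1.le) (add_sub_cancel t 1)),
        ← Real.rpow_add' hc (by simp), add_sub_cancel, Real.rpow_one]
    · rw [indicator_of_notMem hy, Real.zero_rpow (sub_pos.2 ht1).ne', mul_zero]
      exact hnonneg _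
  · rw [indicator_of_notMem hx, Real.zero_rpow ht0.ne', zero_mul]
    exact hnonneg _

theorem isLogConcaveMeasure_smul_restrict {n : ℕ} {S : Set (EuclideanSpace ℝ (Fin n))}
    (hS : Convex ℝ S) (hSm : MeasurableSet S) {c : ℝ} (hc : 0 ≤ c) :
    IsLogConcaveMeasure (ENNReal.ofReal c • volume.restrict S) := by
  refine ⟨S.indicator fun _ => c, isLogConcaveFun_indicator_const hS hc, ?_⟩
  have hdensity : (fun x => ENNReal.ofReal (S.indicator (fun _ => c) x)) =
      S.indicator fun _ => ENNReal.ofReal c := by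
    funext x
    by_cases hx : x ∈ S <;> simp [hx]
  rw [hdensity, withDensity_indicator hSm, withDensity_const]

theorem IsLogConcaveMeasure.absolutelyContinuous {n : ℕ} {μ : Measure (EuclideanSpace ℝ (Fin n))}
    (hμ : IsLogConcaveMeasure μ) : μ ≪ volume := by
  obtain ⟨f, -, rfl⟩ := hμ
  exact withDensity_absolutelyContinuous _ _

theorem IsConvexBody.isLogConcaveMeasure_map {n : ℕ} {K : Set (EuclideanSpace ℝ (Fin n))}
    (hK : IsConvexBody K) {L : ℝ} (hL : L ≠ 0) :
    IsLogConcaveMeasure ((volume.restrict K).map (L⁻¹ • ·)) := by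
  rw [map_smul_restrict volume (inv_ne_zero hL)]
  exact isLogConcaveMeasure_smul_restrict (hK.2.1.smul _) (hK.1.smul _).isClosed.measurableSet
    (abs_nonneg _)

theorem IsConvexIsotropic.isIsotropicMeasure_map {n : ℕ} {K : Set (EuclideanSpace ℝ (Fin n))}
    {L : ℝ} (hK : IsConvexIsotropic K L) :
    IsIsotropicMeasure ((volume.restrict K).map (L⁻¹ • ·)) := by
  obtain ⟨-, -, hL, hmean, hcov⟩ := hK
  have hmap : ∀ g : EuclideanSpace ℝ (Fin n) → ℝ, Continuous g →
      ∫ x, g x ∂(volume.restrict K).map (L⁻¹ • ·) = ∫ x in K, g (L⁻¹ • x) := fun g hg =>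
    integral_map (measurable_const_smul _).aemeasurable hg.aestronglyMeasurable
  constructor
  · intro i
    rw [hmap (fun x => x i) (by fun_prop)]
    simp only [PiLp.smul_apply, smul_eq_mul]
    rw [integral_const_mul, hmean i, mul_zero]
  · intro i j
    rw [hmap (fun x => x i * x j) (by fun_prop)]
    simp only [PiLp.smul_apply, smul_eq_mul, mul_mul_mul_comm L⁻¹]
    rw [integral_const_mul, hcov i j]
    split_ifs
    · field_simp
    · rw [mul_zero]

theorem measure_closedBall_sqrt_le_of_smallBall {n : ℕ} (hn : 1 ≤ n)
    {μ : Measure (EuclideanSpace ℝ (Fin n))} (hμ : μ ≪ volume) {y : EuclideanSpace ℝ (Fin n)}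
    {c₀ : ℝ} (hsb : ∀ ε : ℝ, 0 < ε → ε < c₀ →
      μ {x | ‖x - y‖ ^ 2 ≤ ε * n} ≤ ENNReal.ofReal (ε ^ (c₀ * (n : ℝ))))
    {ε : ℝ} (hε : 0 < ε) (hεc₀ : ε ≤ c₀) :
    μ (closedBall y √(ε * n)) ≤ ENNReal.ofReal (ε ^ (c₀ * (n : ℝ))) := by
  have : NeZero n := ⟨by omega⟩
  have hn0 : (0 : ℝ) < n := by exact_mod_cast this.pos
  refine measure_closedBall_le_of_forall_lt hμ fun r ⟨hr0, hr⟩ => ?_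
  have hr2 : r ^ 2 / n < ε := (div_lt_iff₀ hn0).2 ((Real.lt_sqrt hr0.le).1 hr)
  have hball : closedBall y r = {x | ‖x - y‖ ^ 2 ≤ r ^ 2 / n * n} := by
    ext x
    rw [mem_closedBall, dist_eq_norm, mem_ofPred_eq, div_mul_cancel₀ _ hn0.ne',
      sq_le_sq₀ (norm_nonneg _) hr0.le]
  rw [hball]
  have hexp : 0 ≤ c₀ * (n : ℝ) := mul_nonneg (hε.le.trans hεc₀) hn0.le
  exact (hsb _ (by positivity) (hr2.trans_le hεc₀)).trans
    (ENNReal.ofReal_le_ofReal (Real.rpow_le_rpow (by positivity) hr2.le hexp))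

/-- Suppose `c₀ > 0` is such that the small-ball estimate
`ℙ(‖X - y‖₂² ≤ ε n) ≤ ε^{c₀ n}` holds for every `n ≥ 1`, every isotropic log-concave
random vector `X` in `ℝⁿ` (identified with its law), every `0 < ε < c₀` and every
`y ∈ ℝⁿ`. Then for all `C₂, c₂ > 0`, setting `c₃ = min(c₀, c₂^{1/c₀})`: every convex
body `K ⊂ ℝⁿ` (`n ≥ 1`) in convex isotropic position with
`Vol(K ∩ √(C₂ n) B₂ⁿ) > c₂ⁿ` satisfies `L_K² < C₂ / c₃`. -/
theorem isotropic_constant_lt_of_M_position (c₀ : ℝ) (hc₀ : 0 < c₀)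
    (hsb : ∀ n : ℕ, 1 ≤ n →
      ∀ μ : Measure (EuclideanSpace ℝ (Fin n)), IsProbabilityMeasure μ →
        IsLogConcaveMeasure μ → IsIsotropicMeasure μ →
        ∀ ε : ℝ, 0 < ε → ε < c₀ →
        ∀ y : EuclideanSpace ℝ (Fin n),
          μ {x | ‖x - y‖ ^ 2 ≤ ε * n} ≤ ENNReal.ofReal (ε ^ (c₀ * (n : ℝ)))) :
    ∀ C₂ c₂ : ℝ, 0 < C₂ → 0 < c₂ →
      ∀ n : ℕ, 1 ≤ n → ∀ (K : Set (EuclideanSpace ℝ (Fin n))) (L : ℝ),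
        IsConvexIsotropic K L →
        ENNReal.ofReal (c₂ ^ n) < volume (K ∩ Metric.closedBall 0 (Real.sqrt (C₂ * n))) →
        L ^ 2 < C₂ / min c₀ (c₂ ^ (1 / c₀)) := by
  intro C₂ c₂ hC₂ hc₂ n hn K L hK hvol
  have hμ_iso := hK.isIsotropicMeasure_map
  obtain ⟨hKbody, hKvol, hL, -⟩ := hK
  set μ := (volume.restrict K).map (L⁻¹ • ·) with hμ
  have : IsProbabilityMeasure (volume.restrict K) := ⟨by simpa using hKvol⟩
  have hμ_prob : IsProbabilityMeasure μ :=
    Measure.isProbabilityMeasure_map (measurable_const_smul _).aemeasurable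
  have hμ_lc : IsLogConcaveMeasure μ := hKbody.isLogConcaveMeasure_map hL.ne'
  by_contra! hL2
  set ε := C₂ / L ^ 2
  have hε : ε ≤ min c₀ (c₂ ^ (1 / c₀)) := by
    rw [div_le_iff₀ (by positivity), mul_comm, ← div_le_iff₀ (lt_min hc₀ (by positivity))]
    exact hL2
  have hball := measure_closedBall_sqrt_le_of_smallBall hn hμ_lc.absolutelyContinuous
    (hsb n hn μ hμ_prob hμ_lc hμ_iso · · · 0) (by positivity) (hε.trans (min_le_left _ _))
  have hradius : L * √(ε * n) = √(C₂ * n) := by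
    rw [← Real.sqrt_sq hL.le, ← Real.sqrt_mul (sq_nonneg _)]
    congr 1
    simp only [ε]
    field_simp
  rw [hμ, map_inv_smul_restrict_apply_closedBall _ _ hL, hradius] at hball
  have hpow : ε ^ (c₀ * n) ≤ c₂ ^ n := calc
    ε ^ (c₀ * n) ≤ (c₂ ^ (1 / c₀)) ^ (c₀ * n) :=
      Real.rpow_le_rpow (by positivity) (hε.trans (min_le_right _ _)) (by positivity)
    _ = c₂ ^ n := by
      rw [← Real.rpow_mul hc₂.le, show 1 / c₀ * (c₀ * n) = n by field_simp, Real.rpow_natCast]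
  exact (hvol.trans_le (hball.trans (ENNReal.ofReal_le_ofReal hpow))).false

end
end
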